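/- Let D₁ = {t ∈ [a,b] ∩ N_g⁻ : t is an accumulation point of D_g ∩ [a,t)}, D₂ = {t ∈ [a,b] ∩ N_g⁺ : t is an accumulation point of D_g ∩ (t,b]}, D₃ = {t ∈ [a,b] \ (N_g ∪ D_g) : t is an accumulation point of D_g ∩ [a,b]}. For t ∈ [a,b]: (1) if t* ∈ D₁ ∪ D₂ ∪ D₃, then the restriction Δg|_{[a,b]} is g-differentiable at t if and only if lim_{s→t*, s∈D_g} Δg(s)/(g(s) − g(t)) = 0 (the limit being the appropriate one-sided limit matching the definition of the Stieltjes derivative at t*); (2) in any other case, Δg|_{[a,b]} is g-differentiable at t. Moreover, whenever Δg|_{[a,b]} is g-differentiable at t, (Δg|_{[a,b]})'_g(t) = −χ_{D_g}(t*), where χ_{D_g} is the indicator function of D_g. -/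

import Mathlib

open Set Filter Topology
open scoped Classical

noncomputable section

/-- The right-hand limit `g(t⁺)` of a nondecreasing function `g`. -/
def rLim (g : ℝ → ℝ) (t : ℝ) : ℝ := sInf (g '' Set.Ioi t)

/-- `Δg(t) = g(t⁺) − g(t)`. -/
def jump (g : ℝ → ℝ) (t : ℝ) : ℝ := rLim g t - g t

/-- `C_g`: the set of points near which `g` is constant. -/
def Cset (g : ℝ → ℝ) : Set ℝ :=
  {t | ∃ ε > 0, ∀ u ∈ Set.Ioo (t - ε) (t + ε), g u = g t}

/-- `D_g`: the set of discontinuity points of `g`. -/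
def Dset (g : ℝ → ℝ) : Set ℝ := {t | 0 < jump g t}

/-- The right endpoints `b_n` of the connected components of the open set `C_g`. -/
def rightEndpoints (g : ℝ → ℝ) : Set ℝ :=
  {x | x ∉ Cset g ∧ ∃ s, s < x ∧ Set.Ioo s x ⊆ Cset g}

/-- The left endpoints `a_n` of the connected components of the open set `C_g`. -/
def leftEndpoints (g : ℝ → ℝ) : Set ℝ :=
  {x | x ∉ Cset g ∧ ∃ s, x < s ∧ Set.Ioo x s ⊆ Cset g}

/-- `N_g⁻ = {a_n : n ∈ Λ} \ D_g`. -/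
def Nminus (g : ℝ → ℝ) : Set ℝ := leftEndpoints g \ Dset g

/-- `N_g⁺ = {b_n : n ∈ Λ} \ D_g`. -/
def Nplus (g : ℝ → ℝ) : Set ℝ := rightEndpoints g \ Dset g

/-- `N_g = N_g⁻ ∪ N_g⁺`. -/
def Nset (g : ℝ → ℝ) : Set ℝ := Nminus g ∪ Nplus g

/-- `t* = t` if `t ∉ C_g`, and `t* = b_n` (the right endpoint of the connected component
`(a_n, b_n)` of `C_g` containing `t`) if `t ∈ C_g`. -/
def tstar (g : ℝ → ℝ) (t : ℝ) : ℝ :=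
  if t ∈ Cset g then sSup (connectedComponentIn (Cset g) t) else t

/-- The filter along which the Stieltjes difference quotient is taken at a point of `[a,b]`:
from the right at points of `D_g ∪ N_g⁺ ∪ {a}`, from the left at points of `N_g⁻ ∪ {b}`,
two-sided otherwise. -/
def sFilter (g : ℝ → ℝ) (a b t : ℝ) : Filter ℝ :=
  if t ∈ Dset g ∨ t ∈ Nplus g ∨ t = a then 𝓝[Set.Ioi t ∩ Set.Icc a b] t
  else if t ∈ Nminus g ∨ t = b then 𝓝[Set.Iio t ∩ Set.Icc a b] t
  else 𝓝[Set.Icc a b \ {t}] t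

/-- `f` has Stieltjes derivative (`g`-derivative) `L` at `t`, relative to `[a,b]`. -/
def HasSDerivAt {K : Type*} [RCLike K] (g : ℝ → ℝ) (a b : ℝ) (f : ℝ → K) (t : ℝ) (L : K) :
    Prop :=
  Filter.Tendsto (fun s => (g s - g (tstar g t))⁻¹ • (f s - f (tstar g t)))
    (sFilter g a b (tstar g t)) (𝓝 L)

/-- `f` is `g`-differentiable at `t`, relative to `[a,b]`. -/
def SDiffAt {K : Type*} [RCLike K] (g : ℝ → ℝ) (a b : ℝ) (f : ℝ → K) (t : ℝ) : Prop :=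
  ∃ L, HasSDerivAt g a b f t L

/-- `f` is `g`-continuous at `t` relative to the domain `D`. -/
def GContAt {K : Type*} [RCLike K] (g : ℝ → ℝ) (f : ℝ → K) (D : Set ℝ) (t : ℝ) : Prop :=
  ∀ ε > 0, ∃ δ > 0, ∀ s ∈ D, |g t - g s| < δ → ‖f t - f s‖ < ε

/-- `D₁`: points of `[a,b] ∩ N_g⁻` accumulating `D_g ∩ [a,t)`. -/
def D1 (g : ℝ → ℝ) (a b : ℝ) : Set ℝ :=
  {x | x ∈ Set.Icc a b ∩ Nminus g ∧ AccPt x (𝓟 (Dset g ∩ Set.Ico a x))}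

/-- `D₂`: points of `[a,b] ∩ N_g⁺` accumulating `D_g ∩ (t,b]`. -/
def D2 (g : ℝ → ℝ) (a b : ℝ) : Set ℝ :=
  {x | x ∈ Set.Icc a b ∩ Nplus g ∧ AccPt x (𝓟 (Dset g ∩ Set.Ioc x b))}

/-- `D₃`: points of `[a,b] \ (N_g ∪ D_g)` accumulating `D_g ∩ [a,b]`. -/
def D3 (g : ℝ → ℝ) (a b : ℝ) : Set ℝ :=
  {x | x ∈ Set.Icc a b \ (Nset g ∪ Dset g) ∧ AccPt x (𝓟 (Dset g ∩ Set.Icc a b))}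

/-- `D̃₁`: points of `[a,b] ∩ N_g⁻` not accumulating `D_g ∩ [a,t)`. -/
def Dt1 (g : ℝ → ℝ) (a b : ℝ) : Set ℝ :=
  {x | x ∈ Set.Icc a b ∩ Nminus g ∧ ¬ AccPt x (𝓟 (Dset g ∩ Set.Ico a x))}

/-- `D̃₂`: points of `[a,b] ∩ (N_g⁺ ∪ D_g)` not accumulating `D_g ∩ (t,b]`. -/
def Dt2 (g : ℝ → ℝ) (a b : ℝ) : Set ℝ :=
  {x | x ∈ Set.Icc a b ∩ (Nplus g ∪ Dset g) ∧ ¬ AccPt x (𝓟 (Dset g ∩ Set.Ioc x b))}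

/-- `D̃₃`: points of `[a,b] \ (C_g ∪ N_g ∪ D_g)` not accumulating `D_g ∩ [a,b]`. -/
def Dt3 (g : ℝ → ℝ) (a b : ℝ) : Set ℝ :=
  {x | x ∈ Set.Icc a b \ (Cset g ∪ Nset g ∪ Dset g) ∧ ¬ AccPt x (𝓟 (Dset g ∩ Set.Icc a b))}

/-- `C₁`: points of `[a,b] ∩ N_g⁻` accumulating `C_g ∩ [a,t)`. -/
def C1 (g : ℝ → ℝ) (a b : ℝ) : Set ℝ :=
  {x | x ∈ Set.Icc a b ∩ Nminus g ∧ AccPt x (𝓟 (Cset g ∩ Set.Ico a x))}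

/-- `C₂`: points of `[a,b] ∩ (N_g⁺ ∪ D_g)` accumulating `C_g ∩ (t,b]`. -/
def C2 (g : ℝ → ℝ) (a b : ℝ) : Set ℝ :=
  {x | x ∈ Set.Icc a b ∩ (Nplus g ∪ Dset g) ∧ AccPt x (𝓟 (Cset g ∩ Set.Ioc x b))}

/-- `C₃`: points of `[a,b] \ (C_g ∪ N_g ∪ D_g)` accumulating `C_g ∩ [a,b]`. -/
def C3 (g : ℝ → ℝ) (a b : ℝ) : Set ℝ :=
  {x | x ∈ Set.Icc a b \ (Cset g ∪ Nset g ∪ Dset g) ∧ AccPt x (𝓟 (Cset g ∩ Set.Icc a b))}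

/-- `A_g = {t : sup{s ∈ [a,b] : g(s) = g(t)} ∈ D_g}`. -/
def Ag (g : ℝ → ℝ) (a b : ℝ) : Set ℝ :=
  {t | sSup {s | s ∈ Set.Icc a b ∧ g s = g t} ∈ Dset g}

/-- `H_g`: points lying in some `(s₁, s₂]` with `s₁, s₂ ∈ D_g` and `(s₁, s₂) ⊆ C_g`. -/
def Hg (g : ℝ → ℝ) : Set ℝ :=
  {t | ∃ s₁ ∈ Dset g, ∃ s₂ ∈ Dset g, t ∈ Set.Ioc s₁ s₂ ∧ Set.Ioo s₁ s₂ ⊆ Cset g}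

/-- Membership in `BC_g([a,b], K)`: bounded and `g`-continuous on `[a,b]`. -/
def MemBCg {K : Type*} [RCLike K] (g : ℝ → ℝ) (a b : ℝ) (f : ℝ → K) : Prop :=
  (∃ M, ∀ s ∈ Set.Icc a b, ‖f s‖ ≤ M) ∧ ∀ s ∈ Set.Icc a b, GContAt g f (Set.Icc a b) s

/-- Membership in `BC¹_g([a,b], K)`. -/
def MemBC1g {K : Type*} [RCLike K] (g : ℝ → ℝ) (a b : ℝ) (f : ℝ → K) : Prop :=
  MemBCg g a b f ∧
    ∃ f' : ℝ → K, (∀ s ∈ Set.Icc a b, HasSDerivAt g a b f s (f' s)) ∧ MemBCg g a b f'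

/-!
Write the `g`-difference quotient of `Δg` at `x = t*` as
`Δg(s) / (g s - g x) - Δg(x) / (g s - g x)`. The second term tends to `χ_{D_g}(x)`: it vanishes
when `x ∉ D_g`, and for `x ∈ D_g` the limit is taken from the right, where `g s - g x → Δg(x)`.
The first term vanishes off the countable set `D_g`, whose complement is dense on each side of `x`;
so the quotient converges iff the first term tends to `0` along `D_g`, and the limit is then
`-χ_{D_g}(x)`. If `x ∉ D₁ ∪ D₂ ∪ D₃`, then either `x ∈ D_g`, where `Δg(s) → 0` from the right,
or `D_g` does not accumulate at `x` from the side of the limit, and the condition is vacuous.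
-/

theorem tendsto_sub_iff_of_eq_zero_off {α E : Type*} [TopologicalSpace E] [AddCommGroup E]
    [IsTopologicalAddGroup E] [T2Space E] {l : Filter α} {D : Set α} {u c : α → E} {χ L : E}
    (hu : ∀ s ∉ D, u s = 0) (hc : Tendsto c l (𝓝 χ)) (hl : (l ⊓ 𝓟 Dᶜ).NeBot) :
    Tendsto (fun s => u s - c s) l (𝓝 L) ↔ L = -χ ∧ Tendsto u l (𝓝 0) := by
  constructor
  · intro h
    have hu_lim : Tendsto u l (𝓝 (L + χ)) := by simpa using h.add hc
    have hu_off : Tendsto u (l ⊓ 𝓟 Dᶜ) (𝓝 0) :=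
      tendsto_const_nhds.congr' (eventually_inf_principal.2 (.of_forall fun s hs => (hu s hs).symm))
    have hLχ : L + χ = 0 := tendsto_nhds_unique (hu_lim.mono_left inf_le_left) hu_off
    exact ⟨eq_neg_of_add_eq_zero_left hLχ, hLχ ▸ hu_lim⟩
  · rintro ⟨rfl, h⟩
    simpa using h.sub hc

theorem nhdsWithin_inf_principal_neBot_of_dense {X : Type*} [TopologicalSpace X] {s E : Set X}
    {x : X} (hE : Dense E) (hs : IsOpen s) (hx : x ∈ closure s) : (𝓝[s] x ⊓ 𝓟 E).NeBot := by
  rw [← nhdsWithin_inter', ← mem_closure_iff_nhdsWithin_neBot]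
  exact closure_minimal (hE.open_subset_closure_inter hs) isClosed_closure hx

theorem inf_principal_eq_bot_of_not_accPt {X : Type*} [TopologicalSpace X] {l : Filter X}
    {x : X} {s U : Set X} (hl : l ≤ 𝓝[≠] x) (hU : U ∈ l) (h : ¬AccPt x (𝓟 (s ∩ U))) :
    l ⊓ 𝓟 s = ⊥ := by
  rw [AccPt, not_neBot] at h
  refine eq_bot_mono (le_inf (inf_le_left.trans hl) ?_) h
  exact le_principal_iff.2 <|
    inter_mem (mem_inf_of_right (mem_principal_self s)) (mem_inf_of_left hU)

section Derivator

variable {g : ℝ → ℝ}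

theorem rLim_eq_rightLim (hg : Monotone g) : rLim g = Function.rightLim g :=
  funext fun _ => hg.rightLim_eq_sInf.symm

theorem jump_eq_rightLim_sub (hg : Monotone g) (t : ℝ) :
    jump g t = Function.rightLim g t - g t := by
  rw [jump, rLim_eq_rightLim hg]

theorem jump_nonneg (hg : Monotone g) (t : ℝ) : 0 ≤ jump g t := by
  rw [jump_eq_rightLim_sub hg]
  exact sub_nonneg.2 (hg.le_rightLim le_rfl)

theorem jump_eq_zero_of_notMem_Dset (hg : Monotone g) {t : ℝ} (h : t ∉ Dset g) : jump g t = 0 :=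
  le_antisymm (not_lt.1 h) (jump_nonneg hg t)

theorem countable_Dset (hg : Monotone g) : (Dset g).Countable :=
  hg.countable_not_continuousAt.mono fun t (ht : 0 < jump g t) (hc : ContinuousAt g t) =>
    ht.ne' (by rw [jump_eq_rightLim_sub hg, hc.continuousWithinAt.rightLim_eq, sub_self])

theorem tendsto_sub_nhdsGT_jump (hg : Monotone g) (t : ℝ) :
    Tendsto (fun s => g s - g t) (𝓝[>] t) (𝓝 (jump g t)) := by
  rw [jump_eq_rightLim_sub hg]
  exact (hg.tendsto_rightLim t).sub_const (g t)

theorem tendsto_jump_nhdsGT (hg : Monotone g) (t : ℝ) : Tendsto (jump g) (𝓝[>] t) (𝓝 0) := by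
  have h := ((continuousWithinAt_rightLim_Ici (hg.tendsto_rightLim t)).mono
    Ioi_subset_Ici_self).tendsto.sub (hg.tendsto_rightLim t)
  rw [sub_self] at h
  exact h.congr fun s => (jump_eq_rightLim_sub hg s).symm

theorem tendsto_nhdsGT_inv_sub_smul_jump (hg : Monotone g) {x : ℝ} (hx : x ∈ Dset g) :
    Tendsto (fun s => (g s - g x)⁻¹ • jump g s) (𝓝[>] x) (𝓝 0) := by
  simpa using ((tendsto_sub_nhdsGT_jump hg x).inv₀ (hx : 0 < jump g x).ne').smul
    (tendsto_jump_nhdsGT hg x)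

theorem mem_Cset_iff {t : ℝ} : t ∈ Cset g ↔ ∀ᶠ u in 𝓝 t, g u = g t := by
  simp only [Cset, Metric.eventually_nhds_iff_ball, Real.ball_eq_Ioo, mem_ofPred_eq]

theorem isOpen_Cset : IsOpen (Cset g) := by
  refine isOpen_iff_eventually.2 fun t ht => ?_
  have h := mem_Cset_iff.1 ht
  filter_upwards [h, h.eventually_nhds] with u hu hnear
  exact mem_Cset_iff.2 (hnear.mono fun v hv => hv.trans hu.symm)

theorem hasDerivAt_zero_of_mem_Cset {t : ℝ} (ht : t ∈ Cset g) : HasDerivAt g 0 t :=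
  (hasDerivAt_const t (g t)).congr_of_eventuallyEq (mem_Cset_iff.1 ht)

theorem eq_of_mem_connectedComponentIn_Cset {t u : ℝ}
    (hu : u ∈ connectedComponentIn (Cset g) t) : g u = g t := by
  have hderiv : ∀ v ∈ connectedComponentIn (Cset g) t, HasDerivAt g 0 v := fun v hv =>
    hasDerivAt_zero_of_mem_Cset (connectedComponentIn_subset _ _ hv)
  have ht : t ∈ Cset g := connectedComponentIn_nonempty_iff.1 ⟨u, hu⟩
  exact isOpen_Cset.connectedComponentIn.is_const_of_deriv_eq_zero
    isPreconnected_connectedComponentIn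
    (fun v hv => (hderiv v hv).differentiableAt.differentiableWithinAt)
    (fun v hv => (hderiv v hv).deriv) hu (mem_connectedComponentIn ht)

theorem tstar_spec (hlc : ∀ x : ℝ, ContinuousWithinAt g (Iio x) x) {t b : ℝ} (htb : t ≤ b)
    (hb : b ∉ Cset g) : t ≤ tstar g t ∧ tstar g t ≤ b ∧ g (tstar g t) = g t := by
  by_cases hC : t ∈ Cset g
  swap
  · simp [tstar, hC, htb]
  set K := connectedComponentIn (Cset g) t
  have htK : t ∈ K := mem_connectedComponentIn hC
  have hKb : ∀ v ∈ K, v ≤ b := fun v hv => le_of_not_gt fun hbv => hb <|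
    connectedComponentIn_subset _ _
      (isPreconnected_connectedComponentIn.ordConnected.out htK hv ⟨htb, hbv.le⟩)
  have hbdd : BddAbove K := ⟨b, hKb⟩
  have hsup : sSup K ∉ K := fun hmem => by
    have hnear : ∀ᶠ v in 𝓝[>] sSup K, v ∈ K :=
      mem_nhdsWithin_of_mem_nhds (isOpen_Cset.connectedComponentIn.mem_nhds hmem)
    obtain ⟨v, hvK, hv⟩ := (hnear.and self_mem_nhdsWithin).exists
    exact not_le.2 hv (le_csSup hbdd hvK)
  have hK_lt : K ⊆ Iio (sSup K) := fun v hv =>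
    (le_csSup hbdd hv).lt_of_ne fun h => hsup (h ▸ hv)
  have : (𝓝[K] sSup K).NeBot :=
    mem_closure_iff_nhdsWithin_neBot.1 (csSup_mem_closure ⟨t, htK⟩ hbdd)
  rw [tstar, if_pos hC]
  refine ⟨le_csSup hbdd htK, csSup_le ⟨t, htK⟩ hKb, ?_⟩
  exact tendsto_nhds_unique ((hlc _).mono hK_lt).tendsto <| tendsto_const_nhds.congr' <|
    eventually_nhdsWithin_of_forall fun v hv => (eq_of_mem_connectedComponentIn_Cset hv).symm

end Derivator

section StieltjesFilter

variable {g : ℝ → ℝ} {a b x : ℝ}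

theorem sFilter_eq_nhdsGT (hab : a < b) (hbD : b ∉ Dset g) (hbN : b ∉ Nplus g)
    (hx : x ∈ Icc a b) (h : x ∈ Dset g ∨ x ∈ Nplus g ∨ x = a) : sFilter g a b x = 𝓝[>] x := by
  have hxb : x < b := hx.2.lt_of_ne <| by
    rintro rfl
    rcases h with h | h | rfl
    exacts [hbD h, hbN h, hab.false]
  rw [sFilter, if_pos h, nhdsWithin_inter_of_mem' (Icc_mem_nhdsGT_of_mem ⟨hx.1, hxb⟩)]

theorem sFilter_eq_nhdsLT (hx : x ∈ Icc a b)
    (h₁ : ¬(x ∈ Dset g ∨ x ∈ Nplus g ∨ x = a)) (h₂ : x ∈ Nminus g ∨ x = b) :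
    sFilter g a b x = 𝓝[<] x := by
  have hax : a < x := hx.1.lt_of_ne fun h => h₁ (Or.inr (Or.inr h.symm))
  rw [sFilter, if_neg h₁, if_pos h₂, nhdsWithin_inter_of_mem' (Icc_mem_nhdsLT_of_mem ⟨hax, hx.2⟩)]

theorem sFilter_eq_nhdsNE (hx : x ∈ Icc a b) (h₁ : ¬(x ∈ Dset g ∨ x ∈ Nplus g ∨ x = a))
    (h₂ : ¬(x ∈ Nminus g ∨ x = b)) : sFilter g a b x = 𝓝[≠] x := by
  have hax : a < x := hx.1.lt_of_ne fun h => h₁ (Or.inr (Or.inr h.symm))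
  have hxb : x < b := hx.2.lt_of_ne fun h => h₂ (Or.inr h)
  rw [sFilter, if_neg h₁, if_neg h₂, sdiff_eq, inter_comm,
    nhdsWithin_inter_of_mem' (mem_nhdsWithin_of_mem_nhds (Icc_mem_nhds hax hxb))]

theorem sFilter_inf_compl_Dset_neBot (hg : Monotone g) (hab : a < b) (hbD : b ∉ Dset g)
    (hbN : b ∉ Nplus g) (hx : x ∈ Icc a b) : (sFilter g a b x ⊓ 𝓟 (Dset g)ᶜ).NeBot := by
  have hdense := (countable_Dset hg).dense_compl ℝ
  have hGT : (𝓝[>] x ⊓ 𝓟 (Dset g)ᶜ).NeBot :=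
    nhdsWithin_inf_principal_neBot_of_dense hdense isOpen_Ioi (by simp [closure_Ioi])
  by_cases h₁ : x ∈ Dset g ∨ x ∈ Nplus g ∨ x = a
  · rwa [sFilter_eq_nhdsGT hab hbD hbN hx h₁]
  by_cases h₂ : x ∈ Nminus g ∨ x = b
  · rw [sFilter_eq_nhdsLT hx h₁ h₂]
    exact nhdsWithin_inf_principal_neBot_of_dense hdense isOpen_Iio (by simp [closure_Iio])
  · rw [sFilter_eq_nhdsNE hx h₁ h₂]
    exact hGT.mono (inf_le_inf_right _ (nhdsGT_le_nhdsNE x))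

theorem tendsto_sFilter_inv_sub_smul_jump (hg : Monotone g) (hab : a < b) (hbD : b ∉ Dset g)
    (hbN : b ∉ Nplus g) (hx : x ∈ Icc a b) :
    Tendsto (fun s => (g s - g x)⁻¹ • jump g x) (sFilter g a b x)
      (𝓝 ((Dset g).indicator (fun _ => 1) x)) := by
  by_cases hxD : x ∈ Dset g
  · have hjump : jump g x ≠ 0 := (hxD : 0 < jump g x).ne'
    rw [sFilter_eq_nhdsGT hab hbD hbN hx (Or.inl hxD), indicator_of_mem hxD,
      ← inv_mul_cancel₀ hjump, ← smul_eq_mul]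
    exact ((tendsto_sub_nhdsGT_jump hg x).inv₀ hjump).smul_const _
  · simpa [jump_eq_zero_of_notMem_Dset hg hxD, hxD] using tendsto_const_nhds

theorem sFilter_inf_Dset_eq_bot (hab : a < b) (ha : a ∉ Nminus g) (hbD : b ∉ Dset g)
    (hbN : b ∉ Nplus g) (hx : x ∈ Icc a b) (hxD : x ∉ Dset g)
    (h : x ∉ D1 g a b ∪ D2 g a b ∪ D3 g a b) : sFilter g a b x ⊓ 𝓟 (Dset g) = ⊥ := by
  have hD1 : x ∈ Nminus g → ¬AccPt x (𝓟 (Dset g ∩ Ico a x)) := fun hN hacc =>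
    h (Or.inl (Or.inl ⟨⟨hx, hN⟩, hacc⟩))
  have hD2 : x ∈ Nplus g → ¬AccPt x (𝓟 (Dset g ∩ Ioc x b)) := fun hN hacc =>
    h (Or.inl (Or.inr ⟨⟨hx, hN⟩, hacc⟩))
  have hD3 : x ∉ Nminus g → x ∉ Nplus g → ¬AccPt x (𝓟 (Dset g ∩ Icc a b)) :=
    fun hN₁ hN₂ hacc => h <| Or.inr
      ⟨⟨hx, by rintro ((h' | h') | h'); exacts [hN₁ h', hN₂ h', hxD h']⟩, hacc⟩
  by_cases h₁ : x ∈ Dset g ∨ x ∈ Nplus g ∨ x = a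
  · rw [sFilter_eq_nhdsGT hab hbD hbN hx h₁]
    by_cases hxN : x ∈ Nplus g
    · have hxb : x < b := hx.2.lt_of_ne fun h' => hbN (h' ▸ hxN)
      exact inf_principal_eq_bot_of_not_accPt (nhdsGT_le_nhdsNE x) (Ioc_mem_nhdsGT hxb) (hD2 hxN)
    · obtain rfl : x = a := (h₁.resolve_left hxD).resolve_left hxN
      exact inf_principal_eq_bot_of_not_accPt (nhdsGT_le_nhdsNE x) (Icc_mem_nhdsGT hab)
        (hD3 ha hxN)
  have hxN₂ : x ∉ Nplus g := fun h' => h₁ (Or.inr (Or.inl h'))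
  have hax : a < x := hx.1.lt_of_ne fun h' => h₁ (Or.inr (Or.inr h'.symm))
  by_cases h₂ : x ∈ Nminus g ∨ x = b
  · rw [sFilter_eq_nhdsLT hx h₁ h₂]
    by_cases hxN : x ∈ Nminus g
    · exact inf_principal_eq_bot_of_not_accPt (nhdsLT_le_nhdsNE x) (Ico_mem_nhdsLT hax) (hD1 hxN)
    · exact inf_principal_eq_bot_of_not_accPt (nhdsLT_le_nhdsNE x)
        (Icc_mem_nhdsLT_of_mem ⟨hax, hx.2⟩) (hD3 hxN hxN₂)
  · have hxb : x < b := hx.2.lt_of_ne fun h' => h₂ (Or.inr h')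
    rw [sFilter_eq_nhdsNE hx h₁ h₂]
    exact inf_principal_eq_bot_of_not_accPt le_rfl
      (mem_nhdsWithin_of_mem_nhds (Icc_mem_nhds hax hxb)) (hD3 (fun h' => h₂ (Or.inl h')) hxN₂)

theorem tendsto_sFilter_inf_Dset_inv_sub_smul_jump (hg : Monotone g) (hab : a < b)
    (ha : a ∉ Nminus g) (hbD : b ∉ Dset g) (hbN : b ∉ Nplus g) (hx : x ∈ Icc a b)
    (h : x ∉ D1 g a b ∪ D2 g a b ∪ D3 g a b) :
    Tendsto (fun s => (g s - g x)⁻¹ • jump g s) (sFilter g a b x ⊓ 𝓟 (Dset g)) (𝓝 0) := by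
  by_cases hxD : x ∈ Dset g
  · rw [sFilter_eq_nhdsGT hab hbD hbN hx (Or.inl hxD)]
    exact (tendsto_nhdsGT_inv_sub_smul_jump hg hxD).mono_left inf_le_left
  · rw [sFilter_inf_Dset_eq_bot hab ha hbD hbN hx hxD h]
    exact tendsto_bot

end StieltjesFilter

/-- `g`-differentiability of `Δg` restricted to `[a,b]`, with the value of the derivative. -/
theorem stmt7 (g : ℝ → ℝ) (hg : Monotone g)
    (hlc : ∀ x : ℝ, ContinuousWithinAt g (Set.Iio x) x)
    (a b : ℝ) (hab : a < b) (ha : a ∉ Nminus g)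
    (hb : b ∉ Dset g ∪ Cset g ∪ Nplus g)
    (t : ℝ) (ht : t ∈ Set.Icc a b) :
    (tstar g t ∈ D1 g a b ∪ D2 g a b ∪ D3 g a b →
      (SDiffAt g a b (jump g) t ↔
        Filter.Tendsto (fun s => (g s - g t)⁻¹ • jump g s)
          (sFilter g a b (tstar g t) ⊓ 𝓟 (Dset g)) (𝓝 (0 : ℝ)))) ∧
    (tstar g t ∉ D1 g a b ∪ D2 g a b ∪ D3 g a b → SDiffAt g a b (jump g) t) ∧
    (∀ L : ℝ, HasSDerivAt g a b (jump g) t L →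
      L = -(Set.indicator (Dset g) (fun _ => (1 : ℝ)) (tstar g t))) := by
  have hbD : b ∉ Dset g := fun h => hb (Or.inl (Or.inl h))
  have hbN : b ∉ Nplus g := fun h => hb (Or.inr h)
  obtain ⟨htx, hxb, hgx⟩ := tstar_spec hlc ht.2 fun h => hb (Or.inl (Or.inr h))
  set x := tstar g t
  have hx : x ∈ Icc a b := ⟨ht.1.trans htx, hxb⟩
  have hu : ∀ s ∉ Dset g, (g s - g x)⁻¹ • jump g s = 0 := fun s hs => by
    rw [jump_eq_zero_of_notMem_Dset hg hs, smul_zero]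
  have hderiv : ∀ L, HasSDerivAt g a b (jump g) t L ↔ L = -(Dset g).indicator (fun _ => 1) x ∧
      Tendsto (fun s => (g s - g x)⁻¹ • jump g s) (sFilter g a b x ⊓ 𝓟 (Dset g)) (𝓝 0) := by
    intro L
    rw [tendsto_inf_principal_nhds_iff_of_forall_eq hu, ← tendsto_sub_iff_of_eq_zero_off hu
      (tendsto_sFilter_inv_sub_smul_jump hg hab hbD hbN hx)
      (sFilter_inf_compl_Dset_neBot hg hab hbD hbN hx)]
    simp only [HasSDerivAt, smul_sub, x]
  have hdiff : SDiffAt g a b (jump g) t ↔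
      Tendsto (fun s => (g s - g x)⁻¹ • jump g s) (sFilter g a b x ⊓ 𝓟 (Dset g)) (𝓝 0) :=
    ⟨fun ⟨L, hL⟩ => ((hderiv L).1 hL).2, fun h => ⟨_, (hderiv _).2 ⟨rfl, h⟩⟩⟩
  refine ⟨fun _ => hgx ▸ hdiff, fun hnot => hdiff.2 ?_, fun L hL => ((hderiv L).1 hL).1⟩
  exact tendsto_sFilter_inf_Dset_inv_sub_smul_jump hg hab ha hbD hbN hx hnot
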